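/- arXiv:2409.07954 — 7 statements merged into one kernel-verified Lean document; each statement's English description precedes it below -/
import Mathlib

section
/- Fix R ≥ 1 and let c satisfy 1 ≤ c ≤ R. For every sequence of points (x1ₙ, x2ₙ) lying on the circle (x1 − c)² + x2² = c² with x1ₙ > 0 for all n and (x1ₙ, x2ₙ) → (0,0), one has u2(x1ₙ, x2ₙ) = (x2ₙ² − x1ₙ²)/(2·x1ₙ) → c. In particular, the limit of u2 at the origin along the circles ψ_c depends on c and is therefore non-unique. -/
/-- Fix R ≥ 1 and 1 ≤ c ≤ R. Along any sequence of points on the circle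
(x1 − c)² + x2² = c² with x1ₙ > 0 converging to the origin,
u2(x1ₙ,x2ₙ) = (x2ₙ² − x1ₙ²)/(2x1ₙ) → c. -/
theorem stmt_1 (R c : ℝ) (hR : 1 ≤ R) (hc1 : 1 ≤ c) (hcR : c ≤ R)
    (x1 x2 : ℕ → ℝ)
    (hcirc : ∀ n, (x1 n - c) ^ 2 + (x2 n) ^ 2 = c ^ 2)
    (hpos : ∀ n, 0 < x1 n)
    (hlim : Filter.Tendsto (fun n => (x1 n, x2 n)) Filter.atTop (nhds (0, 0))) :
    Filter.Tendsto (fun n => ((x2 n) ^ 2 - (x1 n) ^ 2) / (2 * x1 n))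
      Filter.atTop (nhds c) := by
  have hx1 : Filter.Tendsto x1 Filter.atTop (nhds 0) :=
    (continuous_fst.tendsto _).comp hlim
  have heq : (fun n => ((x2 n) ^ 2 - (x1 n) ^ 2) / (2 * x1 n)) = fun n => c - x1 n := by
    funext n
    have h := hcirc n
    have hp := hpos n
    have hne : 2 * x1 n ≠ 0 := by positivity
    field_simp
    nlinarith [h]
  rw [heq]
  simpa using (tendsto_const_nhds.sub hx1)
end

section
/- Fix k ∈ ℝ and define on the half-plane {x1 > 0} the Airy stress function χ(x1,x2) = 2·(x1² + x2² − k)·arctan(x2/x1). Then χ satisfies the hyperbolic partial differential equation (x1² − x2²)·(∂²χ/∂x1² − ∂²χ/∂x2²) + 4·x1·x2·(∂²χ/∂x1∂x2) = 0 at every point of {x1 > 0}; equivalently, χ_{,11} − χ_{,22} − Λ·χ_{,12} = 0 with Λ = −4x1x2/(x1² − x2²) wherever x1² ≠ x2². -/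
private lemma hA (b k x : ℝ) (hx : x ≠ 0) :
    HasDerivAt (fun a => 2 * (a ^ 2 + b ^ 2 - k) * Real.arctan (b / a))
      (4 * x * Real.arctan (b / x) - 2 * b * (x ^ 2 + b ^ 2 - k) / (x ^ 2 + b ^ 2)) x := by
  have hx2 : x ^ 2 + b ^ 2 ≠ 0 := by positivity
  have hd : (1:ℝ) + (b / x) ^ 2 ≠ 0 := by positivity
  have h1 : HasDerivAt (fun a : ℝ => b / a) (b * -(x ^ 2)⁻¹) x := by
    simpa [div_eq_mul_inv] using (hasDerivAt_inv hx).const_mul b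
  have h2 : HasDerivAt (fun a : ℝ => Real.arctan (b / a))
      (1 / (1 + (b / x) ^ 2) * (b * -(x ^ 2)⁻¹)) x :=
    (Real.hasDerivAt_arctan (b / x)).comp x h1
  have h3 : HasDerivAt (fun a : ℝ => 2 * (a ^ 2 + b ^ 2 - k)) (2 * (2 * x)) x := by
    have : HasDerivAt (fun a : ℝ => a ^ 2) (2 * x) x := by simpa using hasDerivAt_pow 2 x
    simpa using ((this.add_const (b ^ 2)).sub_const k).const_mul 2
  have h4 := h3.fun_mul h2
  refine h4.congr_deriv ?_
  field_simp
  ring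

private lemma hB (c k y : ℝ) (hc : c ≠ 0) :
    HasDerivAt (fun b' => 2 * (c ^ 2 + b' ^ 2 - k) * Real.arctan (b' / c))
      (4 * y * Real.arctan (y / c) + 2 * c * (c ^ 2 + y ^ 2 - k) / (c ^ 2 + y ^ 2)) y := by
  have hx2 : c ^ 2 + y ^ 2 ≠ 0 := by positivity
  have hd : (1:ℝ) + (y / c) ^ 2 ≠ 0 := by positivity
  have h1 : HasDerivAt (fun b : ℝ => b / c) (1 / c) y := by
    simpa using (hasDerivAt_id y).div_const c
  have h2 : HasDerivAt (fun b : ℝ => Real.arctan (b / c))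
      (1 / (1 + (y / c) ^ 2) * (1 / c)) y :=
    (Real.hasDerivAt_arctan (y / c)).comp (h := fun b : ℝ => b / c) y h1
  have h3 : HasDerivAt (fun b : ℝ => 2 * (c ^ 2 + b ^ 2 - k)) (2 * (2 * y)) y := by
    have : HasDerivAt (fun b : ℝ => b ^ 2) (2 * y) y := by simpa using hasDerivAt_pow 2 y
    simpa using ((this.const_add (c ^ 2)).sub_const k).const_mul 2
  have h4 := h3.fun_mul h2
  refine h4.congr_deriv ?_
  field_simp
  ring

-- second derivative in a (of the a-derivative formula)
private lemma hAA (b k x : ℝ) (hx : x ≠ 0) :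
    HasDerivAt (fun a => 4 * a * Real.arctan (b / a) - 2 * b * (a ^ 2 + b ^ 2 - k) / (a ^ 2 + b ^ 2))
      (4 * Real.arctan (b / x) - 4 * x * b / (x ^ 2 + b ^ 2)
        - 4 * x * b * k / (x ^ 2 + b ^ 2) ^ 2) x := by
  have hx2 : x ^ 2 + b ^ 2 ≠ 0 := by positivity
  have hd : (1:ℝ) + (b / x) ^ 2 ≠ 0 := by positivity
  have h1 : HasDerivAt (fun a : ℝ => b / a) (b * -(x ^ 2)⁻¹) x := by
    simpa [div_eq_mul_inv] using (hasDerivAt_inv hx).const_mul b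
  have h2 : HasDerivAt (fun a : ℝ => Real.arctan (b / a))
      (1 / (1 + (b / x) ^ 2) * (b * -(x ^ 2)⁻¹)) x :=
    (Real.hasDerivAt_arctan (b / x)).comp x h1
  have h3 : HasDerivAt (fun a : ℝ => 4 * a) (4 : ℝ) x := by
    simpa using (hasDerivAt_id x).const_mul (4:ℝ)
  have hsq : HasDerivAt (fun a : ℝ => a ^ 2) (2 * x) x := by simpa using hasDerivAt_pow 2 x
  have hnum : HasDerivAt (fun a : ℝ => 2 * b * (a ^ 2 + b ^ 2 - k)) (2 * b * (2 * x)) x := by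
    simpa using ((hsq.add_const (b ^ 2)).sub_const k).const_mul (2 * b)
  have hden : HasDerivAt (fun a : ℝ => a ^ 2 + b ^ 2) (2 * x) x := hsq.add_const _
  have h4 := (h3.fun_mul h2).fun_sub (hnum.fun_div hden hx2)
  refine h4.congr_deriv ?_
  field_simp
  ring

-- derivative in b of the a-derivative formula (mixed)
private lemma hAB (c k y : ℝ) (hc : c ≠ 0) :
    HasDerivAt (fun b => 4 * c * Real.arctan (b / c) - 2 * b * (c ^ 2 + b ^ 2 - k) / (c ^ 2 + b ^ 2))
      (4 * c ^ 2 / (c ^ 2 + y ^ 2) - 2 * (c ^ 2 + y ^ 2 - k) / (c ^ 2 + y ^ 2)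
        - 4 * y ^ 2 * k / (c ^ 2 + y ^ 2) ^ 2) y := by
  have hx2 : c ^ 2 + y ^ 2 ≠ 0 := by positivity
  have hd : (1:ℝ) + (y / c) ^ 2 ≠ 0 := by positivity
  have h2 : HasDerivAt (fun b : ℝ => Real.arctan (b / c))
      (1 / (1 + (y / c) ^ 2) * (1 / c)) y :=
    (Real.hasDerivAt_arctan (y / c)).comp (h := fun b : ℝ => b / c) y (by simpa using (hasDerivAt_id y).div_const c)
  have hsq : HasDerivAt (fun b : ℝ => b ^ 2) (2 * y) y := by simpa using hasDerivAt_pow 2 y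
  have hnum : HasDerivAt (fun b : ℝ => 2 * b * (c ^ 2 + b ^ 2 - k))
      (2 * (c ^ 2 + y ^ 2 - k) + 2 * y * (2 * y)) y := by
    have hl : HasDerivAt (fun b : ℝ => 2 * b) (2 : ℝ) y := by
      simpa using (hasDerivAt_id y).const_mul (2:ℝ)
    have hr : HasDerivAt (fun b : ℝ => c ^ 2 + b ^ 2 - k) (2 * y) y :=
      (hsq.const_add (c ^ 2)).sub_const k
    simpa using hl.fun_mul hr
  have hden : HasDerivAt (fun b : ℝ => c ^ 2 + b ^ 2) (2 * y) y := hsq.const_add _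
  have h4 := (h2.const_mul (4 * c)).fun_sub (hnum.fun_div hden hx2)
  refine h4.congr_deriv ?_
  field_simp
  ring

-- derivative in b of the b-derivative formula
private lemma hBB (c k y : ℝ) (hc : c ≠ 0) :
    HasDerivAt (fun b => 4 * b * Real.arctan (b / c) + 2 * c * (c ^ 2 + b ^ 2 - k) / (c ^ 2 + b ^ 2))
      (4 * Real.arctan (y / c) + 4 * c * y / (c ^ 2 + y ^ 2)
        + 4 * c * y * k / (c ^ 2 + y ^ 2) ^ 2) y := by
  have hx2 : c ^ 2 + y ^ 2 ≠ 0 := by positivity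
  have hd : (1:ℝ) + (y / c) ^ 2 ≠ 0 := by positivity
  have h2 : HasDerivAt (fun b : ℝ => Real.arctan (b / c))
      (1 / (1 + (y / c) ^ 2) * (1 / c)) y :=
    (Real.hasDerivAt_arctan (y / c)).comp (h := fun b : ℝ => b / c) y (by simpa using (hasDerivAt_id y).div_const c)
  have h3 : HasDerivAt (fun b : ℝ => 4 * b) (4 : ℝ) y := by
    simpa using (hasDerivAt_id y).const_mul (4:ℝ)
  have hsq : HasDerivAt (fun b : ℝ => b ^ 2) (2 * y) y := by simpa using hasDerivAt_pow 2 y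
  have hnum : HasDerivAt (fun b : ℝ => 2 * c * (c ^ 2 + b ^ 2 - k)) (2 * c * (2 * y)) y := by
    simpa using ((hsq.const_add (c ^ 2)).sub_const k).const_mul (2 * c)
  have hden : HasDerivAt (fun b : ℝ => c ^ 2 + b ^ 2) (2 * y) y := hsq.const_add _
  have h4 := (h3.fun_mul h2).fun_add (hnum.fun_div hden hx2)
  refine h4.congr_deriv ?_
  field_simp
  ring

private lemma D1 (k x1 x2 : ℝ) (h : 0 < x1) :
    deriv (fun a => deriv (fun a' => 2 * (a' ^ 2 + x2 ^ 2 - k) * Real.arctan (x2 / a')) a) x1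
      = 4 * Real.arctan (x2 / x1) - 4 * x1 * x2 / (x1 ^ 2 + x2 ^ 2)
        - 4 * x1 * x2 * k / (x1 ^ 2 + x2 ^ 2) ^ 2 := by
  have hEq : (fun a => deriv (fun a' => 2 * (a' ^ 2 + x2 ^ 2 - k) * Real.arctan (x2 / a')) a)
      =ᶠ[nhds x1] (fun a => 4 * a * Real.arctan (x2 / a)
        - 2 * x2 * (a ^ 2 + x2 ^ 2 - k) / (a ^ 2 + x2 ^ 2)) := by
    filter_upwards [eventually_ne_nhds h.ne'] with a ha
    exact (hA x2 k a ha).deriv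
  rw [hEq.deriv_eq, (hAA x2 k x1 h.ne').deriv]

private lemma D2 (k x1 x2 : ℝ) (h : 0 < x1) :
    deriv (fun b => deriv (fun b' => 2 * (x1 ^ 2 + b' ^ 2 - k) * Real.arctan (b' / x1)) b) x2
      = 4 * Real.arctan (x2 / x1) + 4 * x1 * x2 / (x1 ^ 2 + x2 ^ 2)
        + 4 * x1 * x2 * k / (x1 ^ 2 + x2 ^ 2) ^ 2 := by
  have hEq : (fun b => deriv (fun b' => 2 * (x1 ^ 2 + b' ^ 2 - k) * Real.arctan (b' / x1)) b)
      = (fun b => 4 * b * Real.arctan (b / x1)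
        + 2 * x1 * (x1 ^ 2 + b ^ 2 - k) / (x1 ^ 2 + b ^ 2)) := by
    funext b; exact (hB x1 k b h.ne').deriv
  rw [hEq, (hBB x1 k x2 h.ne').deriv]

private lemma D3 (k x1 x2 : ℝ) (h : 0 < x1) :
    deriv (fun b => deriv (fun a => 2 * (a ^ 2 + b ^ 2 - k) * Real.arctan (b / a)) x1) x2
      = 4 * x1 ^ 2 / (x1 ^ 2 + x2 ^ 2) - 2 * (x1 ^ 2 + x2 ^ 2 - k) / (x1 ^ 2 + x2 ^ 2)
        - 4 * x2 ^ 2 * k / (x1 ^ 2 + x2 ^ 2) ^ 2 := by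
  have hEq : (fun b => deriv (fun a => 2 * (a ^ 2 + b ^ 2 - k) * Real.arctan (b / a)) x1)
      = (fun b => 4 * x1 * Real.arctan (b / x1)
        - 2 * b * (x1 ^ 2 + b ^ 2 - k) / (x1 ^ 2 + b ^ 2)) := by
    funext b; exact (hA b k x1 h.ne').deriv
  rw [hEq, (hAB x1 k x2 h.ne').deriv]

/-- The Airy stress function χ(x1,x2) = 2(x1² + x2² − k)·arctan(x2/x1) satisfies
(x1² − x2²)(χ,11 − χ,22) + 4x1x2 χ,12 = 0 on {x1 > 0}; equivalently
χ,11 − χ,22 − Λ χ,12 = 0 with Λ = −4x1x2/(x1² − x2²) wherever x1² ≠ x2². -/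
theorem stmt_6 (k : ℝ) :
    (∀ x1 x2 : ℝ, 0 < x1 →
      (x1 ^ 2 - x2 ^ 2) *
        (deriv (fun a => deriv
            (fun a' => 2 * (a' ^ 2 + x2 ^ 2 - k) * Real.arctan (x2 / a')) a) x1
         - deriv (fun b => deriv
            (fun b' => 2 * (x1 ^ 2 + b' ^ 2 - k) * Real.arctan (b' / x1)) b) x2)
      + 4 * x1 * x2 *
        deriv (fun b => deriv
          (fun a => 2 * (a ^ 2 + b ^ 2 - k) * Real.arctan (b / a)) x1) x2 = 0) ∧
    (∀ x1 x2 : ℝ, 0 < x1 → x1 ^ 2 ≠ x2 ^ 2 →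
      deriv (fun a => deriv
          (fun a' => 2 * (a' ^ 2 + x2 ^ 2 - k) * Real.arctan (x2 / a')) a) x1
      - deriv (fun b => deriv
          (fun b' => 2 * (x1 ^ 2 + b' ^ 2 - k) * Real.arctan (b' / x1)) b) x2
      - (-4 * x1 * x2 / (x1 ^ 2 - x2 ^ 2)) *
        deriv (fun b => deriv
          (fun a => 2 * (a ^ 2 + b ^ 2 - k) * Real.arctan (b / a)) x1) x2 = 0) := by
  constructor
  · intro x1 x2 h
    have hx2 : x1 ^ 2 + x2 ^ 2 ≠ 0 := by positivity
    rw [D1 k x1 x2 h, D2 k x1 x2 h, D3 k x1 x2 h]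
    field_simp
    ring
  · intro x1 x2 h hne
    have hx2 : x1 ^ 2 + x2 ^ 2 ≠ 0 := by positivity
    have hs : x1 ^ 2 - x2 ^ 2 ≠ 0 := sub_ne_zero.mpr hne
    rw [D1 k x1 x2 h, D2 k x1 x2 h, D3 k x1 x2 h]
    field_simp
    ring
end

section
/- Fix k ∈ ℝ and define on the half-plane {x1 > 0}, with r² = x1² + x2², θ = arctan(x2/x1), S = 1 + k/r², sin 2θ = 2x1x2/r², cos 2θ = (x1² − x2²)/r², the stress field σ11 = −2·(2θ + S·sin 2θ), σ22 = 2·(−2θ + S·sin 2θ), σ12 = σ21 = 2·S·cos 2θ. Then this stress field satisfies the equilibrium equations under zero body force: ∂σ11/∂x1 + ∂σ12/∂x2 = 0 and ∂σ21/∂x1 + ∂σ22/∂x2 = 0 at every point of {x1 > 0}. -/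
/-- The stress field σ11 = −2(2θ + S sin 2θ), σ22 = 2(−2θ + S sin 2θ),
σ12 = σ21 = 2S cos 2θ, with θ = arctan(x2/x1), S = 1 + k/r², r² = x1² + x2²,
sin 2θ = 2x1x2/r², cos 2θ = (x1² − x2²)/r², satisfies the equilibrium equations
σ11,1 + σ12,2 = 0 and σ21,1 + σ22,2 = 0 on {x1 > 0}. -/
theorem stmt_7 (k x1 x2 : ℝ) (h : 0 < x1) :
    deriv (fun a => -2 * (2 * Real.arctan (x2 / a)
        + (1 + k / (a ^ 2 + x2 ^ 2)) * (2 * a * x2 / (a ^ 2 + x2 ^ 2)))) x1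
      + deriv (fun b => 2 * (1 + k / (x1 ^ 2 + b ^ 2)) *
          ((x1 ^ 2 - b ^ 2) / (x1 ^ 2 + b ^ 2))) x2 = 0 ∧
    deriv (fun a => 2 * (1 + k / (a ^ 2 + x2 ^ 2)) *
        ((a ^ 2 - x2 ^ 2) / (a ^ 2 + x2 ^ 2))) x1
      + deriv (fun b => 2 * (-2 * Real.arctan (b / x1)
          + (1 + k / (x1 ^ 2 + b ^ 2)) * (2 * x1 * b / (x1 ^ 2 + b ^ 2)))) x2 = 0 := by
  have hx1 : x1 ≠ 0 := ne_of_gt h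
  have hR0 : (0:ℝ) < x1 ^ 2 + x2 ^ 2 := by positivity
  have hR : (x1 ^ 2 + x2 ^ 2) ≠ 0 := ne_of_gt hR0
  -- derivatives of R in each variable
  have hRa : HasDerivAt (fun a : ℝ => a ^ 2 + x2 ^ 2) (2 * x1) x1 := by
    simpa using (hasDerivAt_pow 2 x1).add_const (x2 ^ 2)
  have hRb : HasDerivAt (fun b : ℝ => x1 ^ 2 + b ^ 2) (2 * x2) x2 := by
    simpa using (hasDerivAt_pow 2 x2).const_add (x1 ^ 2)
  -- S = 1 + k/R
  have hSa : HasDerivAt (fun a : ℝ => 1 + k / (a ^ 2 + x2 ^ 2))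
      ((0 * (x1 ^ 2 + x2 ^ 2) - k * (2 * x1)) / (x1 ^ 2 + x2 ^ 2) ^ 2) x1 :=
    ((hasDerivAt_const x1 k).div hRa hR).const_add 1
  have hSb : HasDerivAt (fun b : ℝ => 1 + k / (x1 ^ 2 + b ^ 2))
      ((0 * (x1 ^ 2 + x2 ^ 2) - k * (2 * x2)) / (x1 ^ 2 + x2 ^ 2) ^ 2) x2 :=
    ((hasDerivAt_const x2 k).div hRb hR).const_add 1
  -- fractions
  have hFa : HasDerivAt (fun a : ℝ => 2 * a * x2 / (a ^ 2 + x2 ^ 2))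
      ((2 * x2 * (x1 ^ 2 + x2 ^ 2) - 2 * x1 * x2 * (2 * x1)) / (x1 ^ 2 + x2 ^ 2) ^ 2) x1 := by
    have hnum : HasDerivAt (fun a : ℝ => 2 * a * x2) (2 * x2) x1 := by
      have := (hasDerivAt_id x1).const_mul 2
      simpa [mul_comm, mul_assoc, mul_left_comm] using this.mul_const x2
    exact hnum.div hRa hR
  have hFb : HasDerivAt (fun b : ℝ => 2 * x1 * b / (x1 ^ 2 + b ^ 2))
      ((2 * x1 * (x1 ^ 2 + x2 ^ 2) - 2 * x1 * x2 * (2 * x2)) / (x1 ^ 2 + x2 ^ 2) ^ 2) x2 := by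
    have hnum : HasDerivAt (fun b : ℝ => 2 * x1 * b) (2 * x1) x2 := by
      simpa using (hasDerivAt_id x2).const_mul (2 * x1)
    exact hnum.div hRb hR
  have hGa : HasDerivAt (fun a : ℝ => (a ^ 2 - x2 ^ 2) / (a ^ 2 + x2 ^ 2))
      ((2 * x1 * (x1 ^ 2 + x2 ^ 2) - (x1 ^ 2 - x2 ^ 2) * (2 * x1)) / (x1 ^ 2 + x2 ^ 2) ^ 2) x1 := by
    have hnum : HasDerivAt (fun a : ℝ => a ^ 2 - x2 ^ 2) (2 * x1) x1 := by
      simpa using (hasDerivAt_pow 2 x1).sub_const (x2 ^ 2)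
    exact hnum.div hRa hR
  have hGb : HasDerivAt (fun b : ℝ => (x1 ^ 2 - b ^ 2) / (x1 ^ 2 + b ^ 2))
      ((-(2 * x2) * (x1 ^ 2 + x2 ^ 2) - (x1 ^ 2 - x2 ^ 2) * (2 * x2)) / (x1 ^ 2 + x2 ^ 2) ^ 2) x2 := by
    have hnum : HasDerivAt (fun b : ℝ => x1 ^ 2 - b ^ 2) (-(2 * x2)) x2 := by
      simpa using (hasDerivAt_pow 2 x2).const_sub (x1 ^ 2)
    exact hnum.div hRb hR
  -- arctan pieces
  have hAa : HasDerivAt (fun a : ℝ => Real.arctan (x2 / a))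
      (1 / (1 + (x2 / x1) ^ 2) * ((0 * x1 - x2 * 1) / x1 ^ 2)) x1 := by
    have hin : HasDerivAt (fun a : ℝ => x2 / a) ((0 * x1 - x2 * 1) / x1 ^ 2) x1 :=
      (hasDerivAt_const x1 x2).div (hasDerivAt_id x1) hx1
    exact (Real.hasDerivAt_arctan (x2 / x1)).comp x1 hin
  have hAb : HasDerivAt (fun b : ℝ => Real.arctan (b / x1))
      (1 / (1 + (x2 / x1) ^ 2) * ((1 * x1 - x2 * 0) / x1 ^ 2)) x2 := by
    have hin : HasDerivAt (fun b : ℝ => b / x1) ((1 * x1 - x2 * 0) / x1 ^ 2) x2 :=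
      (hasDerivAt_id x2).div (hasDerivAt_const x2 x1) hx1
    exact (Real.hasDerivAt_arctan (x2 / x1)).comp x2 hin
  -- four full derivatives
  have D1 := ((((hAa.const_mul 2).add (hSa.mul hFa)).const_mul (-2))).deriv
  have D2 := (((hSb.mul hGb).const_mul 2).deriv)
  have D3 := (((hSa.mul hGa).const_mul 2).deriv)
  have D4 := ((((hAb.const_mul (-2)).add (hSb.mul hFb)).const_mul 2)).deriv
  have hsq : x1 ^ 2 ≠ 0 := pow_ne_zero 2 hx1
  have h1p : (1 + (x2 / x1) ^ 2) ≠ 0 := by positivity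
  constructor
  · rw [show (fun b => 2 * (1 + k / (x1 ^ 2 + b ^ 2)) * ((x1 ^ 2 - b ^ 2) / (x1 ^ 2 + b ^ 2)))
        = fun b => 2 * ((1 + k / (x1 ^ 2 + b ^ 2)) * ((x1 ^ 2 - b ^ 2) / (x1 ^ 2 + b ^ 2))) by
        funext b; ring]
    simp only [Pi.add_apply, Pi.mul_apply] at D1 D2
    rw [D1, D2]
    field_simp
    ring
  · rw [show (fun a => 2 * (1 + k / (a ^ 2 + x2 ^ 2)) * ((a ^ 2 - x2 ^ 2) / (a ^ 2 + x2 ^ 2)))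
        = fun a => 2 * ((1 + k / (a ^ 2 + x2 ^ 2)) * ((a ^ 2 - x2 ^ 2) / (a ^ 2 + x2 ^ 2))) by
        funext a; ring]
    simp only [Pi.add_apply, Pi.mul_apply] at D3 D4
    rw [D3, D4]
    field_simp
    ring
end

section
/- Fix k ∈ ℝ. On the set {x1 > 0, x2 ≠ 0}, with r² = x1² + x2², θ = arctan(x2/x1), S = 1 + k/r², define the Lamé parameters μ = 4·S·x1²/r² (= 4S cos²θ) and λ = −4·θ·(x1/x2) − 4·S·x1²/r² (= −4θ cot θ − 4S cos²θ), the strains e11 = 0, e22 = x2/x1, e12 = (x1² − x2²)/(4x1²), and the stresses σ11 = −2(2θ + S·sin 2θ), σ22 = 2(−2θ + S·sin 2θ), σ12 = 2S·cos 2θ, where sin 2θ = 2x1x2/r², cos 2θ = (x1² − x2²)/r². Then the isotropic constitutive relations hold: σ11 = λ(e11 + e22) + 2μ e11, σ22 = λ(e11 + e22) + 2μ e22, and σ12 = 2μ e12. -/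
/-- On {x1 > 0, x2 ≠ 0}, with μ = 4S x1²/r², λ = −4θ(x1/x2) − 4S x1²/r², the stresses
derived from the Airy function satisfy the isotropic constitutive relations
σ_{αβ} = λ e_{γγ} δ_{αβ} + 2μ e_{αβ}. -/
theorem stmt_8 (k x1 x2 : ℝ) (h1 : 0 < x1) (h2 : x2 ≠ 0) :
    let r2 := x1 ^ 2 + x2 ^ 2
    let θ := Real.arctan (x2 / x1)
    let S := 1 + k / r2
    let μ := 4 * S * x1 ^ 2 / r2
    let lam := -4 * θ * (x1 / x2) - 4 * S * x1 ^ 2 / r2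
    let e11 := (0 : ℝ)
    let e22 := x2 / x1
    let e12 := (x1 ^ 2 - x2 ^ 2) / (4 * x1 ^ 2)
    let s11 := -2 * (2 * θ + S * (2 * x1 * x2 / r2))
    let s22 := 2 * (-2 * θ + S * (2 * x1 * x2 / r2))
    let s12 := 2 * S * ((x1 ^ 2 - x2 ^ 2) / r2)
    s11 = lam * (e11 + e22) + 2 * μ * e11 ∧
    s22 = lam * (e11 + e22) + 2 * μ * e22 ∧
    s12 = 2 * μ * e12 := by
  intro r2 θ S μ lam e11 e22 e12 s11 s22 s12
  have hx1 : x1 ≠ 0 := ne_of_gt h1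
  have hr2 : r2 ≠ 0 := by positivity
  refine ⟨?_, ?_, ?_⟩ <;>
    simp only [s11, s22, s12, lam, μ, e11, e22, e12, S, r2] <;>
    field_simp <;> ring
end

section
/- Let c > 0 and k ≥ 4c². Then for every θ with 0 < |θ| < π/2, one has 4·cos θ·(cos θ − θ/ sin θ) + k/c² > 0. Hence at every point of the circle (x1 − c)² + x2² = c² (where r = 2c cos θ) the quantity λ + 2μ = −4θ cot θ + 4(1 + k/r²)cos²θ is strictly positive, and since μ = 4(1 + k/r²)cos²θ > 0 the strong-ellipticity condition μ(λ + 2μ) > 0 holds. -/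
lemma aux_tan (x : ℝ) (h0 : 0 < x) (h : x < Real.pi / 2) :
    x * Real.cos x < Real.sin x := by
  have hc : 0 < Real.cos x := Real.cos_pos_of_mem_Ioo ⟨by linarith [Real.pi_pos], h⟩
  have := Real.lt_tan h0 h
  rw [Real.tan_eq_sin_div_cos, lt_div_iff₀ hc] at this
  linarith

/-- For c > 0, k ≥ 4c² and 0 < |θ| < π/2, one has
4 cos θ (cos θ − θ/sin θ) + k/c² > 0; hence on the circle ψ_c (where r = 2c cos θ)
λ + 2μ > 0 and, since μ > 0, the strong-ellipticity condition μ(λ + 2μ) > 0 holds. -/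
theorem stmt_10 (c k θ : ℝ) (hc : 0 < c) (hk : 4 * c ^ 2 ≤ k)
    (h1 : 0 < |θ|) (h2 : |θ| < Real.pi / 2) :
    4 * Real.cos θ * (Real.cos θ - θ / Real.sin θ) + k / c ^ 2 > 0 ∧
    (let r := 2 * c * Real.cos θ
     let μ := 4 * (1 + k / r ^ 2) * Real.cos θ ^ 2
     μ > 0 ∧
       -4 * θ * (Real.cos θ / Real.sin θ)
           + 4 * (1 + k / r ^ 2) * Real.cos θ ^ 2 > 0 ∧
       μ * (-4 * θ * (Real.cos θ / Real.sin θ)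
           + 4 * (1 + k / r ^ 2) * Real.cos θ ^ 2) > 0) := by
  have hθlt := abs_lt.mp h2
  have hθne : θ ≠ 0 := fun h => by simp [h] at h1
  have hcos : 0 < Real.cos θ := Real.cos_pos_of_mem_Ioo ⟨hθlt.1, hθlt.2⟩
  have hsne : Real.sin θ ≠ 0 := by
    rcases lt_or_gt_of_ne hθne with hneg | hpos
    · exact ne_of_lt (Real.sin_neg_of_neg_of_neg_pi_lt hneg (by linarith [Real.pi_pos, hθlt.1]))
    · exact ne_of_gt (Real.sin_pos_of_pos_of_lt_pi hpos (by linarith [Real.pi_pos]))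
  have hA : θ * Real.cos θ / Real.sin θ < 1 := by
    rcases lt_or_gt_of_ne hθne with hneg | hpos
    · have hs : Real.sin θ < 0 := Real.sin_neg_of_neg_of_neg_pi_lt hneg (by linarith [Real.pi_pos, hθlt.1])
      have := aux_tan (-θ) (by linarith) (by linarith)
      rw [Real.cos_neg, Real.sin_neg] at this
      have heq2 : θ * Real.cos θ / Real.sin θ = (-θ) * Real.cos θ / (-Real.sin θ) := by
        rw [div_eq_div_iff hsne (by linarith : (-Real.sin θ) ≠ 0)]; ring
      rw [heq2, div_lt_one (by linarith)]
      linarith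
    · have hs : 0 < Real.sin θ := Real.sin_pos_of_pos_of_lt_pi hpos (by linarith [Real.pi_pos])
      rw [div_lt_one hs]
      exact aux_tan θ hpos hθlt.2
  have hc2 : (0:ℝ) < c ^ 2 := by positivity
  have hk' : (4:ℝ) ≤ k / c ^ 2 := (le_div_iff₀ hc2).mpr (by linarith)
  have e : Real.cos θ * (θ / Real.sin θ) = θ * Real.cos θ / Real.sin θ := by ring
  have main : 4 * Real.cos θ * (Real.cos θ - θ / Real.sin θ) + k / c ^ 2 > 0 := by
    nlinarith [sq_nonneg (Real.cos θ), hA, hk']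
  refine ⟨main, ?_⟩
  intro r μ
  have hr2 : r ^ 2 = 4 * c ^ 2 * Real.cos θ ^ 2 := by show (2*c*Real.cos θ)^2 = _; ring
  have hr2pos : 0 < r ^ 2 := by rw [hr2]; positivity
  have hkpos : 0 < k := by nlinarith
  have hμ : μ > 0 := by
    show 4 * (1 + k / r ^ 2) * Real.cos θ ^ 2 > 0
    have : 0 < k / r ^ 2 := div_pos hkpos hr2pos
    positivity
  have heq : -4 * θ * (Real.cos θ / Real.sin θ)
      + 4 * (1 + k / r ^ 2) * Real.cos θ ^ 2
      = 4 * Real.cos θ * (Real.cos θ - θ / Real.sin θ) + k / c ^ 2 := by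
    rw [hr2]
    field_simp
    ring
  refine ⟨hμ, ?_, ?_⟩
  · rw [heq]; exact main
  · rw [heq]; exact mul_pos hμ main
end

section
/- Let c1 > c2 > 0 and k ≥ 0. For 0 < a < 2c2 set θ_A(a) = arccos(a/(2c1)) and θ_D(a) = arccos(a/(2c2)), and define T(a) = −8·(c2·θ_D·cos 2θ_D − c1·θ_A·cos 2θ_A) − 4·(c1·sin 2θ_A − c2·sin 2θ_D) − 8·(c2·θ_D − c1·θ_A) − 2k·(tan θ_D/c2 − tan θ_A/c1). Then T(a) → 0 as a → 0⁺. (T(a) is the resultant traction in the x2-direction acting over the part of the boundary of the lens-shaped region between the circles ψ_{c2} and ψ_{c1} lying inside the ball of radius a about the origin; its vanishing limit expresses that the total force acting on the region is zero.) -/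
attribute [local fun_prop] Real.continuous_arccos Real.continuous_cos Real.continuous_sin


/-- The resultant traction T(a) in the x2-direction over the boundary of the punctured
lens-shaped region tends to 0 as a → 0⁺ (total force zero). -/
theorem stmt_13 (c1 c2 k : ℝ) (h21 : c2 < c1) (h2 : 0 < c2) (hk : 0 ≤ k) :
    Filter.Tendsto (fun a : ℝ =>
      let θA := Real.arccos (a / (2 * c1))
      let θD := Real.arccos (a / (2 * c2))
      (-8 * (c2 * θD * Real.cos (2 * θD) - c1 * θA * Real.cos (2 * θA))
        - 4 * (c1 * Real.sin (2 * θA) - c2 * Real.sin (2 * θD))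
        - 8 * (c2 * θD - c1 * θA)
        - 2 * k * (Real.tan θD / c2 - Real.tan θA / c1)))
      (nhdsWithin 0 (Set.Ioi 0)) (nhds 0) := by
  have h1 : 0 < c1 := h2.trans h21
  set F : ℝ → ℝ := fun a =>
    (-8 * (c2 * Real.arccos (a / (2 * c2)) * Real.cos (2 * Real.arccos (a / (2 * c2)))
        - c1 * Real.arccos (a / (2 * c1)) * Real.cos (2 * Real.arccos (a / (2 * c1))))
      - 4 * (c1 * Real.sin (2 * Real.arccos (a / (2 * c1)))
        - c2 * Real.sin (2 * Real.arccos (a / (2 * c2))))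
      - 8 * (c2 * Real.arccos (a / (2 * c2)) - c1 * Real.arccos (a / (2 * c1)))
      - 2 * k * (2 * a * (1 / (4 * c1 ^ 2) - 1 / (4 * c2 ^ 2)) /
          (Real.sqrt (1 - (a / (2 * c2)) ^ 2) + Real.sqrt (1 - (a / (2 * c1)) ^ 2)))) with hFdef
  have hpi : (2:ℝ) * (Real.pi / 2) = Real.pi := by ring
  have hF0 : F 0 = 0 := by
    simp [hFdef, Real.arccos_zero, hpi, Real.cos_pi, Real.sin_pi]
    ring
  have hcont : Filter.Tendsto F (nhds 0) (nhds 0) := by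
    have hden : ContinuousAt (fun a : ℝ =>
        Real.sqrt (1 - (a / (2 * c2)) ^ 2) + Real.sqrt (1 - (a / (2 * c1)) ^ 2)) 0 := by
      fun_prop
    have hden0 : (fun a : ℝ =>
        Real.sqrt (1 - (a / (2 * c2)) ^ 2) + Real.sqrt (1 - (a / (2 * c1)) ^ 2)) 0 ≠ 0 := by
      norm_num
    have hFc : ContinuousAt F 0 := by
      apply ContinuousAt.sub
      apply ContinuousAt.sub
      apply ContinuousAt.sub
      · fun_prop
      · fun_prop
      · fun_prop
      · exact ContinuousAt.mul (by fun_prop) (ContinuousAt.div (by fun_prop) hden hden0)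
    have := hFc.tendsto
    rwa [hF0] at this
  have hFt : Filter.Tendsto F (nhdsWithin 0 (Set.Ioi 0)) (nhds 0) :=
    hcont.mono_left nhdsWithin_le_nhds
  apply hFt.congr'
  have hmem : Set.Ioo (0:ℝ) c2 ∈ nhdsWithin (0:ℝ) (Set.Ioi 0) :=
    Ioo_mem_nhdsGT_of_mem ⟨le_refl 0, h2⟩
  filter_upwards [hmem] with a ha
  obtain ⟨ha0, hac2⟩ := ha
  -- only the tan term differs
  have hx2 : a / (2 * c2) ≤ 1 := by
    rw [div_le_one (by linarith)]; linarith
  have hx1 : a / (2 * c1) ≤ 1 := by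
    rw [div_le_one (by linarith)]; linarith
  set s2 := Real.sqrt (1 - (a / (2 * c2)) ^ 2) with hs2def
  set s1 := Real.sqrt (1 - (a / (2 * c1)) ^ 2) with hs1def
  have hx2' : 0 < a / (2 * c2) := by positivity
  have hx1' : 0 < a / (2 * c1) := by positivity
  have hs2sq : s2 ^ 2 = 1 - (a / (2 * c2)) ^ 2 :=
    Real.sq_sqrt (by nlinarith)
  have hs1sq : s1 ^ 2 = 1 - (a / (2 * c1)) ^ 2 :=
    Real.sq_sqrt (by nlinarith)
  have hx1lt : a / (2 * c1) < 1 := by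
    rw [div_lt_one (by linarith)]; linarith
  have hs1pos : 0 < s1 := Real.sqrt_pos.mpr (by
    nlinarith [mul_pos (sub_pos.mpr hx1lt) (by positivity : (0:ℝ) < 1 + a / (2 * c1))])
  have hs2nn : 0 ≤ s2 := Real.sqrt_nonneg _
  have hsum : s2 + s1 ≠ 0 := by positivity
  have htan : Real.tan (Real.arccos (a / (2 * c2))) / c2
      - Real.tan (Real.arccos (a / (2 * c1))) / c1
      = 2 * a * (1 / (4 * c1 ^ 2) - 1 / (4 * c2 ^ 2)) / (s2 + s1) := by
    have ha : a ≠ 0 := ne_of_gt ha0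
    rw [Real.tan_arccos, Real.tan_arccos, ← hs2def, ← hs1def]
    have l2 : s2 / (a / (2 * c2)) / c2 = 2 * s2 / a := by
      field_simp
    have l1 : s1 / (a / (2 * c1)) / c1 = 2 * s1 / a := by
      field_simp
    rw [l1, l2, div_sub_div_same, div_eq_div_iff ha hsum]
    linear_combination (2 : ℝ) * hs2sq - 2 * hs1sq
  simp only [hFdef]
  rw [← htan]
end

section
/- Let c1 > c2 > 0 and k ≥ 0. For 0 < a < 2c2 set θ_A(a) = arccos(a/(2c1)), θ_D(a) = arccos(a/(2c2)) and V(a) = 4c1²·sin 2θ_A − 4c2²·sin 2θ_D − 4k·(θ_A − θ_D) + 2k·(tan θ_A − tan θ_D). Then a·|V(a)| → 4k·(c1 − c2) as a → 0⁺; in particular, for k > 0 the boundary work |V(a)| (twice the strain energy contribution of the circular boundary arcs) grows like 4k(c1 − c2)/a, i.e. is O(a⁻¹), while for k = 0 it tends to 0. -/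
/-- With V(a) the boundary-work contribution of the circular arcs,
a·|V(a)| → 4k(c1 − c2) as a → 0⁺; in particular |V(a)| = O(a⁻¹) when k > 0
and |V(a)| → 0 when k = 0. -/
theorem stmt_16 (c1 c2 k : ℝ) (h21 : c2 < c1) (h2 : 0 < c2) (hk : 0 ≤ k) :
    Filter.Tendsto (fun a : ℝ =>
      let θA := Real.arccos (a / (2 * c1))
      let θD := Real.arccos (a / (2 * c2))
      a * |4 * c1 ^ 2 * Real.sin (2 * θA) - 4 * c2 ^ 2 * Real.sin (2 * θD)
            - 4 * k * (θA - θD) + 2 * k * (Real.tan θA - Real.tan θD)|)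
      (nhdsWithin 0 (Set.Ioi 0)) (nhds (4 * k * (c1 - c2))) := by
  have h1 : (0:ℝ) < c1 := h2.trans h21
  set F : ℝ → ℝ := fun a =>
    a * (4 * c1 ^ 2 * Real.sin (2 * Real.arccos (a / (2 * c1))))
      - a * (4 * c2 ^ 2 * Real.sin (2 * Real.arccos (a / (2 * c2))))
      - a * (4 * k * (Real.arccos (a / (2 * c1)) - Real.arccos (a / (2 * c2))))
      + 2 * k * (2 * c1 * Real.sqrt (1 - (a / (2 * c1)) ^ 2)
                 - 2 * c2 * Real.sqrt (1 - (a / (2 * c2)) ^ 2)) with hF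
  have harc1 : Continuous fun a : ℝ => Real.arccos (a / (2 * c1)) :=
    Real.continuous_arccos.comp (by fun_prop)
  have harc2 : Continuous fun a : ℝ => Real.arccos (a / (2 * c2)) :=
    Real.continuous_arccos.comp (by fun_prop)
  have hFcont : Continuous F := by
    rw [hF]; fun_prop
  have hF0 : |F 0| = 4 * k * (c1 - c2) := by
    have : F 0 = 4 * k * (c1 - c2) := by
      simp [hF, Real.sqrt_one]
      ring
    rw [this, abs_of_nonneg]
    apply mul_nonneg (by positivity)
    linarith
  have htend : Filter.Tendsto (fun a => |F a|) (nhdsWithin 0 (Set.Ioi 0))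
      (nhds (4 * k * (c1 - c2))) := by
    rw [← hF0]
    exact ((hFcont.abs.tendsto 0)).mono_left nhdsWithin_le_nhds
  apply htend.congr'
  filter_upwards [self_mem_nhdsWithin] with a (ha : 0 < a)
  simp only []
  rw [show a * |4 * c1 ^ 2 * Real.sin (2 * Real.arccos (a / (2 * c1)))
        - 4 * c2 ^ 2 * Real.sin (2 * Real.arccos (a / (2 * c2)))
        - 4 * k * (Real.arccos (a / (2 * c1)) - Real.arccos (a / (2 * c2)))
        + 2 * k * (Real.tan (Real.arccos (a / (2 * c1)))
                   - Real.tan (Real.arccos (a / (2 * c2))))|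
      = |a * (4 * c1 ^ 2 * Real.sin (2 * Real.arccos (a / (2 * c1)))
        - 4 * c2 ^ 2 * Real.sin (2 * Real.arccos (a / (2 * c2)))
        - 4 * k * (Real.arccos (a / (2 * c1)) - Real.arccos (a / (2 * c2)))
        + 2 * k * (Real.tan (Real.arccos (a / (2 * c1)))
                   - Real.tan (Real.arccos (a / (2 * c2)))))|
    from by rw [abs_mul, abs_of_pos ha]]
  congr 1
  rw [hF, Real.tan_arccos, Real.tan_arccos]
  have ha' : a ≠ 0 := ne_of_gt ha
  field_simp
end
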